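/- arXiv:2306.03452 — 3 statements merged into one kernel-verified Lean document; each statement's English description precedes it below -/
import Mathlib

section
/- Let G be a locally compact, totally disconnected, Hausdorff topological group, let K be a compact subgroup of G, and let W be an open set with K ⊆ W. Then there exists a compact open subgroup U of G with K ⊆ U ⊆ W. -/
/-!
Van Dantzig's argument: a compact clopen neighbourhood `C` of `1` is moved into itself by a whole
neighbourhood of `1` (compactness of `C`), so its stabilizer is a compact open subgroup inside `C`.
For a compact subgroup `K ⊆ W`, pick such a subgroup `V` with `K * V ⊆ W` and replace it
by `N = ⋂_{k ∈ K} k V k⁻¹`. A tube-lemma argument over the compact set `K` shows that `N` is still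
open, and `K` normalizes `N`, so `K * N` is a subgroup; it is compact, open, and lies in
`K * V ⊆ W`.
-/

open Set Topology Filter Pointwise

theorem exists_isClopen_isCompact_subset_of_mem_nhds {X : Type*} [TopologicalSpace X]
    [LocallyCompactSpace X] [T2Space X] [TotallyDisconnectedSpace X] {x : X} {O : Set X}
    (hO : O ∈ 𝓝 x) : ∃ C, IsClopen C ∧ IsCompact C ∧ x ∈ C ∧ C ⊆ O := by
  obtain ⟨s, hs, hxs, hsO⟩ :=
    exists_compact_subset isOpen_interior (mem_interior_iff_mem_nhds.2 hO)
  obtain ⟨C, hC, hxC, hCs⟩ :=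
    loc_compact_Haus_tot_disc_of_zero_dim.mem_nhds_iff.1 (isOpen_interior.mem_nhds hxs)
  exact ⟨C, hC, hs.of_isClosed_subset hC.isClosed (hCs.trans interior_subset), hxC,
    hCs.trans (interior_subset.trans (hsO.trans interior_subset))⟩

section

variable {G : Type*} [Group G]

namespace MulAction

theorem stabilizer_set_subset {C : Set G} (hC : (1 : G) ∈ C) : (stabilizer G C : Set G) ⊆ C :=
  fun g hg => by simpa [mem_stabilizer_iff.1 hg] using smul_mem_smul_set (a := g) hC

variable [TopologicalSpace G] [IsTopologicalGroup G]

theorem isOpen_stabilizer_of_isCompact_of_isOpen {C : Set G} (hCc : IsCompact C) (hCo : IsOpen C) :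
    IsOpen (stabilizer G C : Set G) := by
  obtain ⟨T, hT, hTC⟩ := compact_open_separated_mul_left hCc hCo subset_rfl
  have hsmul : ∀ g ∈ T, g • C ⊆ C := fun g hg =>
    smul_set_subset_iff.2 fun c hc => hTC (mul_mem_mul hg hc)
  refine Subgroup.isOpen_of_mem_nhds _ (mem_of_superset (inter_mem hT (inv_mem_nhds_one G hT)) ?_)
  rintro g ⟨hg, hg'⟩
  exact (hsmul g hg).antisymm (subset_smul_set_iff.2 (hsmul g⁻¹ hg'))

end MulAction

theorem exists_isCompact_isOpen_subgroup_subset [TopologicalSpace G] [IsTopologicalGroup G]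
    [LocallyCompactSpace G] [T2Space G] [TotallyDisconnectedSpace G] {O : Set G}
    (hO : O ∈ 𝓝 (1 : G)) :
    ∃ V : Subgroup G, IsCompact (V : Set G) ∧ IsOpen (V : Set G) ∧ (V : Set G) ⊆ O := by
  obtain ⟨C, hCclopen, hCc, h1C, hCO⟩ := exists_isClopen_isCompact_subset_of_mem_nhds hO
  have hVC := MulAction.stabilizer_set_subset h1C
  have hVo := MulAction.isOpen_stabilizer_of_isCompact_of_isOpen hCc hCclopen.isOpen
  exact ⟨_, hCc.of_isClosed_subset (Subgroup.isClosed_of_isOpen _ hVo) hVC, hVo, hVC.trans hCO⟩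

namespace Subgroup

/-- The subgroup `⋂_{k ∈ K} k V k⁻¹`. -/
def iInfConj (V : Subgroup G) (K : Set G) : Subgroup G :=
  ⨅ k ∈ K, V.comap (MulAut.conj k⁻¹).toMonoidHom

variable {V : Subgroup G} {K : Set G} {g : G}

theorem mem_iInfConj : g ∈ V.iInfConj K ↔ ∀ k ∈ K, k⁻¹ * g * k ∈ V := by
  simp [iInfConj]

theorem iInfConj_le (hK : (1 : G) ∈ K) : V.iInfConj K ≤ V :=
  fun g hg => by simpa using mem_iInfConj.1 hg 1 hK

theorem le_normalizer_iInfConj (K : Subgroup G) : K ≤ normalizer (V.iInfConj K : Set G) := by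
  refine le_normalizer_iff.2 fun k hk n hn => mem_iInfConj.2 fun k' hk' => ?_
  have hconj : k'⁻¹ * (k * n * k⁻¹) * k' = (k⁻¹ * k')⁻¹ * n * (k⁻¹ * k') := by group
  rw [hconj]
  exact mem_iInfConj.1 hn _ (K.mul_mem (K.inv_mem hk) hk')

theorem isOpen_iInfConj [TopologicalSpace G] [IsTopologicalGroup G] (hK : IsCompact K)
    (hV : IsOpen (V : Set G)) : IsOpen (V.iInfConj K : Set G) := by
  have hcont : Continuous fun p : G × G => p.2⁻¹ * p.1 * p.2 := by fun_prop
  have hnear : ∀ k ∈ K, ∀ᶠ p : G × G in 𝓝 (1, k), p.2⁻¹ * p.1 * p.2 ∈ V := fun k _ =>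
    hcont.continuousAt.eventually_mem (hV.mem_nhds (by simp))
  refine isOpen_of_mem_nhds (g := 1) _ ?_
  filter_upwards [hK.eventually_forall_of_forall_eventually (P := fun g k => k⁻¹ * g * k ∈ V)
    hnear] with g hg using mem_iInfConj.2 hg

end Subgroup

end

/-- Van Dantzig type theorem: in a locally compact, totally disconnected, Hausdorff
topological group, every compact subgroup `K` contained in an open set `W` is contained
in a compact open subgroup `U` with `U ⊆ W`. -/
theorem stmt_0 {G : Type*} [Group G] [TopologicalSpace G] [IsTopologicalGroup G]
    [LocallyCompactSpace G] [T2Space G] [TotallyDisconnectedSpace G]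
    (K : Subgroup G) (hK : IsCompact (K : Set G))
    (W : Set G) (hW : IsOpen W) (hKW : (K : Set G) ⊆ W) :
    ∃ U : Subgroup G, IsCompact (U : Set G) ∧ IsOpen (U : Set G) ∧
      (K : Set G) ⊆ (U : Set G) ∧ (U : Set G) ⊆ W := by
  obtain ⟨O, hO, hKO⟩ := compact_open_separated_mul_right hK hW hKW
  obtain ⟨V, hVc, hVo, hVO⟩ := exists_isCompact_isOpen_subgroup_subset hO
  set N := V.iInfConj K
  have hNo : IsOpen (N : Set G) := Subgroup.isOpen_iInfConj hK hVo
  have hNV : N ≤ V := Subgroup.iInfConj_le K.one_mem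
  have hNc : IsCompact (N : Set G) := hVc.of_isClosed_subset (N.isClosed_of_isOpen hNo) hNV
  have hKN : ((K ⊔ N : Subgroup G) : Set G) = K * N :=
    Subgroup.coe_mul_of_left_le_normalizer_right K N (Subgroup.le_normalizer_iInfConj K)
  refine ⟨K ⊔ N, ?_, ?_, le_sup_left (a := K), ?_⟩ <;> rw [hKN]
  · exact hK.mul hNc
  · exact hNo.mul_left
  · exact (mul_subset_mul_left ((SetLike.coe_subset_coe.2 hNV).trans hVO)).trans hKO
end

section
/- Let G be a topological group with a left-invariant proper metric d generating its topology. For every α ≥ 0 and ε > 0 there exists δ > 0 such that for every closed subgroup V of G and all g, g', g'' ∈ G: if fold_V(g, g') ≤ (α, δ) and fold_V(g', g'') ≤ (α, δ), then fold_V(g, g'') ≤ (2α, ε). (The δ is independent of V.) -/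
/-- Foliated triangle inequality: for a topological group with a left-invariant proper
metric generating its topology, given `α ≥ 0` and `ε > 0` there is `δ > 0`, independent
of the closed subgroup `V`, such that `fold_V(g,g') ≤ (α,δ)` and `fold_V(g',g'') ≤ (α,δ)`
imply `fold_V(g,g'') ≤ (2α,ε)`.  Here `fold_V(g,g') ≤ (β,η)` means:
there is `v ∈ V` with `dist 1 v ≤ β` and `dist (g*v) g' ≤ η`. -/
theorem stmt_2 {G : Type*} [Group G] [MetricSpace G] [IsTopologicalGroup G] [ProperSpace G]
    (hinv : ∀ h x y : G, dist (h * x) (h * y) = dist x y)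
    (α : ℝ) (hα : 0 ≤ α) :
    ∀ ε : ℝ, 0 < ε → ∃ δ : ℝ, 0 < δ ∧
      ∀ V : Subgroup G, IsClosed (V : Set G) → ∀ g g' g'' : G,
        (∃ v ∈ V, dist (1 : G) v ≤ α ∧ dist (g * v) g' ≤ δ) →
        (∃ v ∈ V, dist (1 : G) v ≤ α ∧ dist (g' * v) g'' ≤ δ) →
        (∃ v ∈ V, dist (1 : G) v ≤ 2 * α ∧ dist (g * v) g'' ≤ ε) := by
  intro ε hε
  set K : Set G := Metric.closedBall (1 : G) α with hKdef
  have hK : IsCompact K := isCompact_closedBall _ _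
  set n : Set (G × G) := {p | dist p.2 (p.1 * p.2) < ε / 2} with hndef
  have hn : IsOpen n := by
    apply isOpen_lt
    · exact Continuous.dist continuous_snd (Continuous.mul continuous_fst continuous_snd)
    · exact continuous_const
  have hsub : ({(1 : G)} ×ˢ K) ⊆ n := by
    rintro ⟨w, v⟩ ⟨hw, hv⟩
    simp only [Set.mem_singleton_iff] at hw
    simp only [hndef, Set.mem_setOf_eq, hw, one_mul, dist_self]
    linarith
  obtain ⟨u, u', hu, hu', h1u, hKu', huu'⟩ :=
    generalized_tube_lemma isCompact_singleton hK hn hsub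
  obtain ⟨r, hr, hball⟩ := Metric.isOpen_iff.1 hu 1 (h1u rfl)
  refine ⟨min (r / 2) (ε / 2), by positivity, ?_⟩
  rintro V - g g' g'' ⟨v₁, hv₁V, hv₁α, hd1⟩ ⟨v₂, hv₂V, hv₂α, hd2⟩
  refine ⟨v₁ * v₂, V.mul_mem hv₁V hv₂V, ?_, ?_⟩
  · have h1 : dist v₁ (v₁ * v₂) = dist (1 : G) v₂ := by
      have := hinv v₁ 1 v₂; simpa using this
    calc dist (1 : G) (v₁ * v₂) ≤ dist (1 : G) v₁ + dist v₁ (v₁ * v₂) := dist_triangle _ _ _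
      _ = dist (1 : G) v₁ + dist (1 : G) v₂ := by rw [h1]
      _ ≤ α + α := add_le_add hv₁α hv₂α
      _ = 2 * α := by ring
  · set w : G := (g * v₁)⁻¹ * g' with hwdef
    have hw1 : dist (1 : G) w = dist (g * v₁) g' := by
      have := hinv (g * v₁) 1 w
      simpa [hwdef, mul_assoc] using this.symm
    have hwu : w ∈ u := by
      apply hball
      simp only [Metric.mem_ball]
      rw [dist_comm, hw1]
      calc dist (g * v₁) g' ≤ min (r / 2) (ε / 2) := hd1
        _ ≤ r / 2 := min_le_left _ _
        _ < r := by linarith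
    have hv₂K : v₂ ∈ K := by simpa [hKdef, dist_comm] using hv₂α
    have hmem : (w, v₂) ∈ n := huu' ⟨hwu, hKu' hv₂K⟩
    have hlt : dist v₂ (w * v₂) < ε / 2 := hmem
    have heq : dist (g * v₁ * v₂) (g' * v₂) = dist v₂ (w * v₂) := by
      have := hinv (g * v₁) v₂ (w * v₂)
      have h2 : (g * v₁) * (w * v₂) = g' * v₂ := by
        simp [hwdef, mul_assoc]
      rw [h2] at this
      exact this
    calc dist (g * (v₁ * v₂)) g''
        ≤ dist (g * (v₁ * v₂)) (g' * v₂) + dist (g' * v₂) g'' := dist_triangle _ _ _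
      _ = dist v₂ (w * v₂) + dist (g' * v₂) g'' := by rw [← mul_assoc, heq]
      _ ≤ ε / 2 + min (r / 2) (ε / 2) := add_le_add hlt.le hd2
      _ ≤ ε / 2 + ε / 2 := by gcongr; exact min_le_right _ _
      _ = ε := by ring
end

section
/- For n ≥ 1, let C_*([0,n]) be the chain complex of abelian groups which in degree k is free on the set of pairs (I, J) with {0, n} ⊆ J ⊆ I ⊆ {0, 1, …, n} and |I ∖ J| = k, with differential d(I, J) = Σ_{j=1}^{l} (−1)^j ( (I ∖ {i_j}, J) − (I, J ∪ {i_j}) ), where I ∖ J = {i_1 < i_2 < ⋯ < i_l}. Then d ∘ d = 0, and the augmentation ε : C_0([0,n]) → ℤ sending each generator (I, I) to 1 induces an isomorphism H_0(C_*([0,n])) ≅ ℤ, while H_k(C_*([0,n])) = 0 for all k ≥ 1. -/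
/-!
Read a generator `(I, J)` as a face of the cube `[0,1]^{1,…,n-1}`: its coordinate `c` is `0`
if `c ∉ I`, `1` if `c ∈ J`, and free if `c ∈ I \ J`. For an inner coordinate `c`, the map `r_c`
pushing faces onto the facet `c = 0` (and killing those free in `c`) is chain homotopic to the
identity, through the map `h_c` freeing `c` in faces on the facet `c = 1`. Chain homotopies to
the identity compose, so the composite of all `r_c` is one too; it vanishes in positive degrees
and is `ε` followed by the vertex `({0, n}, {0, n})` in degree `0`, which gives the homology.
-/

/-- `(I, J)` is a generator of degree `(I \ J).card` of the cube complex `C_*([0,n])`: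
`{0, n} ⊆ J ⊆ I ⊆ {0, 1, …, n}`. -/
def IsCubeGen (n k : ℕ) (p : Finset ℕ × Finset ℕ) : Prop :=
  0 ∈ p.2 ∧ n ∈ p.2 ∧ p.2 ⊆ p.1 ∧ p.1 ⊆ Finset.range (n + 1) ∧ (p.1 \ p.2).card = k

/-- The set of generators of `C_k([0,n])`. -/
def CubeGen (n k : ℕ) : Type :=
  {p : Finset ℕ × Finset ℕ // IsCubeGen n k p}

/-- The degree-`k` chain group of `C_*([0,n])`: the free abelian group on `CubeGen n k`. -/
abbrev CubeChain (n k : ℕ) : Type := CubeGen n k →₀ ℤ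

lemma IsCubeGen.erase {n k : ℕ} {I J : Finset ℕ} (h : IsCubeGen n (k + 1) (I, J))
    {i : ℕ} (hi : i ∈ I \ J) : IsCubeGen n k (I.erase i, J) := by
  obtain ⟨h0, hn, hJI, hIr, hc⟩ := h
  obtain ⟨hiI, hiJ⟩ := Finset.mem_sdiff.mp hi
  refine ⟨h0, hn, fun j hj => Finset.mem_erase.mpr ⟨fun hji => hiJ (hji ▸ hj), hJI hj⟩,
    (Finset.erase_subset _ _).trans hIr, ?_⟩
  have hset : I.erase i \ J = (I \ J).erase i := by
    ext x
    simp only [Finset.mem_sdiff, Finset.mem_erase, ne_eq]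
    tauto
  rw [hset, Finset.card_erase_of_mem hi, hc]
  omega

lemma IsCubeGen.insertGen {n k : ℕ} {I J : Finset ℕ} (h : IsCubeGen n (k + 1) (I, J))
    {i : ℕ} (hi : i ∈ I \ J) : IsCubeGen n k (I, insert i J) := by
  obtain ⟨h0, hn, hJI, hIr, hc⟩ := h
  obtain ⟨hiI, hiJ⟩ := Finset.mem_sdiff.mp hi
  refine ⟨Finset.mem_insert_of_mem h0, Finset.mem_insert_of_mem hn,
    Finset.insert_subset_iff.mpr ⟨hiI, hJI⟩, hIr, ?_⟩
  have hset : I \ insert i J = (I \ J).erase i := by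
    ext x
    simp only [Finset.mem_sdiff, Finset.mem_erase, Finset.mem_insert, ne_eq]
    tauto
  rw [hset, Finset.card_erase_of_mem hi, hc]
  omega

/-- The value of the differential on a generator `(I, J)` of degree `k + 1`:
with `I \ J = {i₁ < ⋯ < i_l}`, it is
`∑_{j=1}^{l} (−1)^j ((I ∖ {i_j}, J) − (I, J ∪ {i_j}))`; the exponent
`((I \ J).filter (· ≤ i)).card` is exactly the (1-based) position `j` of `i` in `I \ J`. -/
noncomputable def cubeDGen (n k : ℕ) (x : CubeGen n (k + 1)) : CubeChain n k :=
  ∑ i ∈ (x.1.1 \ x.1.2).attach,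
    ((-1 : ℤ) ^ ((x.1.1 \ x.1.2).filter (fun y => y ≤ (i : ℕ))).card) •
      (Finsupp.single ⟨(x.1.1.erase (i : ℕ), x.1.2), x.2.erase i.2⟩ (1 : ℤ) -
        Finsupp.single ⟨(x.1.1, insert (i : ℕ) x.1.2), x.2.insertGen i.2⟩ (1 : ℤ))

/-- The differential `d : C_{k+1}([0,n]) → C_k([0,n])` (ℤ-linear extension of `cubeDGen`). -/
noncomputable def cubeDiff (n k : ℕ) : CubeChain n (k + 1) →ₗ[ℤ] CubeChain n k :=
  Finsupp.lsum ℤ fun x => LinearMap.toSpanSingleton ℤ (CubeChain n k) (cubeDGen n k x)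

/-- The augmentation `ε : C_0([0,n]) → ℤ`, sending each generator `(I, I)` to `1`. -/
noncomputable def cubeAug (n : ℕ) : CubeChain n 0 →ₗ[ℤ] ℤ :=
  Finsupp.lsum ℤ fun _ => (LinearMap.id : ℤ →ₗ[ℤ] ℤ)

open Finset

lemma Finset.sum_sum_erase_eq_zero {α M : Type*} [DecidableEq α] [AddCommMonoid M]
    (s : Finset α) (f : α → α → M) (hf : ∀ a ∈ s, ∀ b ∈ s, a ≠ b → f a b + f b a = 0) :
    ∑ a ∈ s, ∑ b ∈ s.erase a, f a b = 0 := by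
  rw [sum_sigma']
  refine sum_involution (fun x _ => ⟨x.2, x.1⟩) (fun x hx => ?_) (fun x hx _ => ?_)
    (fun x hx => ?_) (fun _ _ => rfl)
  · obtain ⟨ha, hb⟩ := mem_sigma.mp hx
    exact hf _ ha _ (mem_of_mem_erase hb) (ne_of_mem_erase hb).symm
  · exact fun e => ne_of_mem_erase (mem_sigma.mp hx).2 (congrArg Sigma.fst e)
  · obtain ⟨ha, hb⟩ := mem_sigma.mp hx
    exact mem_sigma.mpr ⟨mem_of_mem_erase hb, mem_erase.mpr ⟨(ne_of_mem_erase hb).symm, ha⟩⟩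

lemma Finset.sdiff_sdiff_sdiff_of_disjoint {α : Type*} [DecidableEq α] {s t u : Finset α}
    (h : Disjoint u (s \ t)) : (s \ u) \ (t \ u) = s \ t := by
  ext x
  have hx : x ∈ u → x ∉ s \ t := fun hx => disjoint_left.mp h hx
  simp only [mem_sdiff] at hx ⊢
  tauto

/-- With `#{y ∈ S | y ≤ a}` the position of `a` in `S`: removing `a` moves `b` down by one
exactly when `a < b`, and removing `b` moves `a` down exactly when `b < a`. -/
lemma card_filter_le_add_card_filter_le {S : Finset ℕ} {a b : ℕ} (ha : a ∈ S) (hb : b ∈ S)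
    (hab : a ≠ b) :
    #{y ∈ S | y ≤ a} + #{y ∈ S | y ≤ b}
      = #{y ∈ S.erase a | y ≤ b} + #{y ∈ S.erase b | y ≤ a} + 1 := by
  rw [filter_erase, filter_erase]
  rcases lt_or_gt_of_ne hab with h | h
  · have := card_erase_add_one (mem_filter.mpr ⟨ha, h.le⟩ : a ∈ {y ∈ S | y ≤ b})
    rw [erase_eq_of_notMem (s := {y ∈ S | y ≤ a}) (fun hm => by simp at hm; omega)]
    omega
  · have := card_erase_add_one (mem_filter.mpr ⟨hb, h.le⟩ : b ∈ {y ∈ S | y ≤ a})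
    rw [erase_eq_of_notMem (s := {y ∈ S | y ≤ b}) (fun hm => by simp at hm; omega)]
    omega

lemma neg_one_pow_smul_add_neg_one_pow_smul {M : Type*} [AddCommGroup M] {x y : ℕ}
    (h : Odd (x + y)) (v : M) : (-1 : ℤ) ^ x • v + (-1 : ℤ) ^ y • v = 0 := by
  rcases Nat.even_or_odd x with hx | hx
  · rw [hx.neg_one_pow, ((Nat.odd_add'.mp h).mpr hx).neg_one_pow, one_smul, neg_one_smul,
      add_neg_cancel]
  · rw [hx.neg_one_pow, ((Nat.odd_add.mp h).mp hx).neg_one_pow, one_smul, neg_one_smul,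
      neg_add_cancel]

section ChainHomotopy

variable {R : Type*} [Ring R] {C : ℕ → Type*} [∀ k, AddCommGroup (C k)] [∀ k, Module R (C k)]

structure IsChainHomotopyToId (d : ∀ k, C (k + 1) →ₗ[R] C k) (r : ∀ k, C k →ₗ[R] C k)
    (h : ∀ k, C k →ₗ[R] C (k + 1)) : Prop where
  zero : (d 0).comp (h 0) = LinearMap.id - r 0
  succ : ∀ k, (d (k + 1)).comp (h (k + 1)) + (h k).comp (d k) = LinearMap.id - r (k + 1)

namespace IsChainHomotopyToId

variable {d : ∀ k, C (k + 1) →ₗ[R] C k} {r s : ∀ k, C k →ₗ[R] C k}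
  {h g : ∀ k, C k →ₗ[R] C (k + 1)}

lemma refl : IsChainHomotopyToId d (fun _ => LinearMap.id) 0 :=
  ⟨by simp, fun _ => by simp⟩

lemma apply_zero (H : IsChainHomotopyToId d r h) (x : C 0) : r 0 x = x - d 0 (h 0 x) := by
  have := LinearMap.congr_fun H.zero x
  simp only [LinearMap.comp_apply, LinearMap.sub_apply, LinearMap.id_apply] at this
  rw [this, sub_sub_cancel]

lemma apply_succ (H : IsChainHomotopyToId d r h) {k : ℕ} (x : C (k + 1)) :
    r (k + 1) x = x - d (k + 1) (h (k + 1) x) - h k (d k x) := by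
  have := LinearMap.congr_fun (H.succ k) x
  simp only [LinearMap.add_apply, LinearMap.comp_apply, LinearMap.sub_apply,
    LinearMap.id_apply] at this
  rw [sub_sub, this, sub_sub_cancel]

lemma comp_d (H : IsChainHomotopyToId d r h) (hd : ∀ k, (d k).comp (d (k + 1)) = 0) (k : ℕ) :
    (d k).comp (r (k + 1)) = (r k).comp (d k) := by
  ext x
  have hdd : ∀ y, d k (d (k + 1) y) = 0 := fun y => LinearMap.congr_fun (hd k) y
  simp only [LinearMap.comp_apply, H.apply_succ, map_sub, hdd, sub_zero]
  cases k with
  | zero => rw [H.apply_zero]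
  | succ k =>
    have : d k (d (k + 1) x) = 0 := LinearMap.congr_fun (hd k) x
    rw [H.apply_succ, this, map_zero, sub_zero]

lemma trans (H₁ : IsChainHomotopyToId d r h) (H₂ : IsChainHomotopyToId d s g)
    (hd : ∀ k, (d k).comp (d (k + 1)) = 0) :
    IsChainHomotopyToId d (fun k => (s k).comp (r k)) (fun k => h k + (g k).comp (r k)) where
  zero := by
    rw [LinearMap.comp_add, H₁.zero, ← LinearMap.comp_assoc, H₂.zero]
    ext x
    simp
  succ k := by
    have hrd := H₁.comp_d hd k
    rw [LinearMap.comp_add, LinearMap.add_comp, add_add_add_comm, H₁.succ,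
      ← LinearMap.comp_assoc, LinearMap.comp_assoc _ (r k), ← hrd, ← LinearMap.comp_assoc,
      ← LinearMap.add_comp, H₂.succ]
    ext x
    simp

lemma mem_range_zero (H : IsChainHomotopyToId d r h) {u : C 0} (hu : r 0 u = 0) :
    u ∈ LinearMap.range (d 0) :=
  ⟨h 0 u, by
    have := H.apply_zero u
    rw [hu] at this
    exact (sub_eq_zero.mp this.symm).symm⟩

lemma mem_range_succ (H : IsChainHomotopyToId d r h) {k : ℕ} {u : C (k + 1)}
    (hdu : d k u = 0) (hu : r (k + 1) u = 0) : u ∈ LinearMap.range (d (k + 1)) :=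
  ⟨h (k + 1) u, by
    have := H.apply_succ u
    rw [hu, hdu, map_zero, sub_zero] at this
    exact (sub_eq_zero.mp this.symm).symm⟩

end IsChainHomotopyToId

end ChainHomotopy

section Cube

variable {n k c : ℕ} {I J : Finset ℕ}

/-- The generator `p` of `C_k([0,n])`, or `0` when `p` is not one. Being total, it lets
faces and cofaces be written without carrying proofs that they are generators. -/
noncomputable def cubeSingle (n k : ℕ) (p : Finset ℕ × Finset ℕ) : CubeChain n k :=
  open Classical in if h : IsCubeGen n k p then Finsupp.single (α := CubeGen n k) ⟨p, h⟩ 1 else 0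

lemma cubeSingle_of_isCubeGen {p : Finset ℕ × Finset ℕ} (h : IsCubeGen n k p) :
    cubeSingle n k p = Finsupp.single (α := CubeGen n k) ⟨p, h⟩ 1 :=
  dif_pos h

lemma CubeChain.hom_ext {M : Type*} [AddCommGroup M] {φ ψ : CubeChain n k →ₗ[ℤ] M}
    (h : ∀ p, IsCubeGen n k p → φ (cubeSingle n k p) = ψ (cubeSingle n k p)) : φ = ψ :=
  Finsupp.lhom_ext' fun x => LinearMap.ext_ring <| by
    have := h x.1 x.2
    rw [cubeSingle_of_isCubeGen x.2] at this
    exact this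

noncomputable def CubeChain.lift {M : Type*} [AddCommGroup M]
    (f : Finset ℕ × Finset ℕ → M) : CubeChain n k →ₗ[ℤ] M :=
  Finsupp.linearCombination ℤ fun x => f x.1

lemma CubeChain.lift_cubeSingle {M : Type*} [AddCommGroup M] (f : Finset ℕ × Finset ℕ → M)
    {p : Finset ℕ × Finset ℕ} (h : IsCubeGen n k p) :
    CubeChain.lift f (cubeSingle n k p) = f p := by
  rw [cubeSingle_of_isCubeGen h]
  exact (Finsupp.linearCombination_single ℤ _ _).trans (one_smul ℤ _)

noncomputable def cubeBdry (n k : ℕ) (I J : Finset ℕ) : CubeChain n k :=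
  ∑ i ∈ I \ J, (-1 : ℤ) ^ #{y ∈ I \ J | y ≤ i} •
    (cubeSingle n k (I.erase i, J) - cubeSingle n k (I, insert i J))

lemma cubeDiff_cubeSingle (h : IsCubeGen n (k + 1) (I, J)) :
    cubeDiff n k (cubeSingle n (k + 1) (I, J)) = cubeBdry n k I J := by
  rw [cubeSingle_of_isCubeGen h]
  refine (Finsupp.lsum_single ℤ _ _ _).trans ?_
  rw [LinearMap.toSpanSingleton_apply, one_smul, cubeBdry, ← sum_attach (I \ J)]
  refine sum_congr rfl fun i _ => ?_
  rw [cubeSingle_of_isCubeGen (h.erase i.2), cubeSingle_of_isCubeGen (h.insertGen i.2)]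

lemma cubeAug_cubeSingle {p : Finset ℕ × Finset ℕ} (h : IsCubeGen n 0 p) :
    cubeAug n (cubeSingle n 0 p) = 1 := by
  rw [cubeSingle_of_isCubeGen h]
  exact Finsupp.lsum_single ℤ _ _ _

lemma cubeAug_comp_cubeDiff : (cubeAug n).comp (cubeDiff n 0) = 0 := by
  refine CubeChain.hom_ext fun ⟨I, J⟩ h => ?_
  rw [LinearMap.comp_apply, cubeDiff_cubeSingle h, cubeBdry, map_sum, LinearMap.zero_apply]
  refine sum_eq_zero fun i hi => ?_
  rw [map_smul, map_sub, cubeAug_cubeSingle (h.erase hi), cubeAug_cubeSingle (h.insertGen hi),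
    sub_self, smul_zero]

lemma cubeDiff_comp_cubeDiff (k : ℕ) : (cubeDiff n k).comp (cubeDiff n (k + 1)) = 0 := by
  refine CubeChain.hom_ext fun ⟨I, J⟩ h => ?_
  have hface : ∀ i ∈ I \ J, cubeDiff n k ((-1 : ℤ) ^ #{y ∈ I \ J | y ≤ i} •
      (cubeSingle n (k + 1) (I.erase i, J) - cubeSingle n (k + 1) (I, insert i J)))
      = ∑ i' ∈ (I \ J).erase i,
        (-1 : ℤ) ^ (#{y ∈ I \ J | y ≤ i} + #{y ∈ (I \ J).erase i | y ≤ i'}) •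
          (cubeSingle n k ((I.erase i).erase i', J) - cubeSingle n k (I.erase i, insert i' J)
            - cubeSingle n k (I.erase i', insert i J)
            + cubeSingle n k (I, insert i' (insert i J))) := by
    intro i hi
    rw [map_smul, map_sub, cubeDiff_cubeSingle (h.erase hi), cubeDiff_cubeSingle (h.insertGen hi),
      cubeBdry, cubeBdry, erase_sdiff_comm, sdiff_insert, ← sum_sub_distrib, smul_sum]
    refine sum_congr rfl fun i' _ => ?_
    rw [pow_add, mul_smul, ← smul_sub]
    congr 2
    abel
  rw [LinearMap.comp_apply, cubeDiff_cubeSingle h, cubeBdry, map_sum, sum_congr rfl hface,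
    LinearMap.zero_apply]
  -- the face square of `(i, i')` is that of `(i', i)`, counted with the opposite sign
  refine sum_sum_erase_eq_zero _ _ fun i hi i' hi' hne => ?_
  rw [erase_right_comm (a := i'), insert_comm i, sub_right_comm _ (cubeSingle n k (I.erase i, _))]
  refine neg_one_pow_smul_add_neg_one_pow_smul ⟨#{y ∈ (I \ J).erase i | y ≤ i'}
    + #{y ∈ (I \ J).erase i' | y ≤ i}, ?_⟩ _
  have := card_filter_le_add_card_filter_le hi hi' hne
  omega

lemma IsCubeGen.sdiff {S : Finset ℕ} (h : IsCubeGen n k (I, J)) (h0 : 0 ∉ S) (hn : n ∉ S)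
    (hS : Disjoint S (I \ J)) : IsCubeGen n k (I \ S, J \ S) := by
  obtain ⟨hJ0, hJn, hJI, hIr, hcard⟩ := h
  exact ⟨mem_sdiff.mpr ⟨hJ0, h0⟩, mem_sdiff.mpr ⟨hJn, hn⟩, sdiff_subset_sdiff hJI le_rfl,
    sdiff_subset.trans hIr, (sdiff_sdiff_sdiff_of_disjoint hS).symm ▸ hcard⟩

lemma IsCubeGen.eraseJ (h : IsCubeGen n k (I, J)) (hc : c ∈ J) (hc0 : c ≠ 0)
    (hcn : c ≠ n) : IsCubeGen n (k + 1) (I, J.erase c) := by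
  obtain ⟨hJ0, hJn, hJI, hIr, hcard⟩ := h
  refine ⟨mem_erase.mpr ⟨hc0.symm, hJ0⟩, mem_erase.mpr ⟨hcn.symm, hJn⟩,
    (erase_subset _ _).trans hJI, hIr, ?_⟩
  rw [sdiff_erase (hJI hc), card_insert_of_notMem (fun h => (mem_sdiff.mp h).2 hc), hcard]

noncomputable def cubeRetract (n : ℕ) (S : Finset ℕ) (k : ℕ) :
    CubeChain n k →ₗ[ℤ] CubeChain n k :=
  CubeChain.lift fun p => if Disjoint S (p.1 \ p.2) then cubeSingle n k (p.1 \ S, p.2 \ S) else 0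

noncomputable def cubeContract (n c k : ℕ) : CubeChain n k →ₗ[ℤ] CubeChain n (k + 1) :=
  CubeChain.lift fun p => if c ∈ p.2 then
    (-1 : ℤ) ^ (#{y ∈ p.1 \ p.2.erase c | y ≤ c} + 1) • cubeSingle n (k + 1) (p.1, p.2.erase c)
  else 0

lemma cubeRetract_cubeSingle {S : Finset ℕ} (h : IsCubeGen n k (I, J)) :
    cubeRetract n S k (cubeSingle n k (I, J))
      = if Disjoint S (I \ J) then cubeSingle n k (I \ S, J \ S) else 0 :=
  CubeChain.lift_cubeSingle _ h

lemma cubeContract_cubeSingle (h : IsCubeGen n k (I, J)) :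
    cubeContract n c k (cubeSingle n k (I, J)) = if c ∈ J then
      (-1 : ℤ) ^ (#{y ∈ I \ J.erase c | y ≤ c} + 1) • cubeSingle n (k + 1) (I, J.erase c)
    else 0 :=
  CubeChain.lift_cubeSingle _ h

lemma cubeRetract_singleton_of_mem (h : IsCubeGen n k (I, J)) (hc : c ∈ J) :
    cubeRetract n {c} k (cubeSingle n k (I, J)) = cubeSingle n k (I.erase c, J.erase c) := by
  rw [cubeRetract_cubeSingle h, if_pos (disjoint_singleton_left.mpr fun h => (mem_sdiff.mp h).2 hc),
    sdiff_singleton_eq_erase, sdiff_singleton_eq_erase]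

lemma cubeRetract_singleton_of_notMem (h : IsCubeGen n k (I, J)) (hc : c ∉ I) :
    cubeRetract n {c} k (cubeSingle n k (I, J)) = cubeSingle n k (I, J) := by
  rw [cubeRetract_cubeSingle h, if_pos (disjoint_singleton_left.mpr fun h => hc (mem_sdiff.mp h).1),
    sdiff_singleton_eq_erase, sdiff_singleton_eq_erase, erase_eq_of_notMem hc,
    erase_eq_of_notMem fun h' => hc (h.2.2.1 h')]

lemma cubeRetract_singleton_comp {S : Finset ℕ} (h0 : 0 ∉ insert c S)
    (hn : n ∉ insert c S) :
    (cubeRetract n {c} k).comp (cubeRetract n S k) = cubeRetract n (insert c S) k := by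
  refine CubeChain.hom_ext fun ⟨I, J⟩ h => ?_
  rw [LinearMap.comp_apply, cubeRetract_cubeSingle h, cubeRetract_cubeSingle h]
  by_cases hS : Disjoint S (I \ J)
  · have h' := h.sdiff (fun h => h0 (mem_insert_of_mem h)) (fun h => hn (mem_insert_of_mem h)) hS
    rw [if_pos hS, cubeRetract_cubeSingle h', sdiff_sdiff_sdiff_of_disjoint hS, sdiff_sdiff_left,
      sdiff_sdiff_left, sup_eq_union, union_comm, ← insert_eq]
    simp only [disjoint_insert_left, disjoint_singleton_left, hS, and_true]
  · rw [if_neg hS, map_zero, if_neg (fun h => hS (disjoint_insert_left.mp h).2)]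

lemma cubeDiff_cubeContract_of_mem (h : IsCubeGen n k (I, J)) (hc : c ∈ J) (hc0 : c ≠ 0)
    (hcn : c ≠ n) :
    cubeDiff n k (cubeContract n c k (cubeSingle n k (I, J)))
      = cubeSingle n k (I, J) - cubeRetract n {c} k (cubeSingle n k (I, J))
        + ∑ i ∈ I \ J, (-1 : ℤ) ^ (#{y ∈ insert c (I \ J) | y ≤ c} + 1
            + #{y ∈ insert c (I \ J) | y ≤ i}) •
          (cubeSingle n k (I.erase i, J.erase c) - cubeSingle n k (I, insert i (J.erase c))) := by
  have hcS : c ∉ I \ J := fun h => (mem_sdiff.mp h).2 hc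
  rw [cubeContract_cubeSingle h, if_pos hc, map_smul, cubeDiff_cubeSingle (h.eraseJ hc hc0 hcn),
    cubeBdry, sdiff_erase (h.2.2.1 hc), sum_insert hcS, smul_add, smul_sum,
    cubeRetract_singleton_of_mem h hc, smul_smul, ← pow_add, insert_erase hc]
  congr 1
  · rw [Odd.neg_one_pow ⟨#{y ∈ insert c (I \ J) | y ≤ c}, by ring⟩, neg_one_smul, neg_sub]
  · exact sum_congr rfl fun i _ => by rw [smul_smul, ← pow_add]

lemma cubeContract_cubeBdry_of_mem (h : IsCubeGen n (k + 1) (I, J)) (hc : c ∈ J) :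
    cubeContract n c k (cubeBdry n k I J)
      = ∑ i ∈ I \ J, (-1 : ℤ) ^ (#{y ∈ I \ J | y ≤ i}
            + (#{y ∈ (insert c (I \ J)).erase i | y ≤ c} + 1)) •
          (cubeSingle n (k + 1) (I.erase i, J.erase c)
            - cubeSingle n (k + 1) (I, insert i (J.erase c))) := by
  rw [cubeBdry, map_sum]
  refine sum_congr rfl fun i hi => ?_
  have hic : i ≠ c := fun e => (mem_sdiff.mp hi).2 (e ▸ hc)
  rw [map_smul, map_sub, cubeContract_cubeSingle (h.erase hi), cubeContract_cubeSingle
    (h.insertGen hi), if_pos hc, if_pos (mem_insert_of_mem hc), erase_insert_of_ne hic,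
    erase_sdiff_comm, sdiff_insert, sdiff_erase (h.2.2.1 hc), ← smul_sub, smul_smul, ← pow_add]

lemma cubeContract_cubeBdry_of_notMem (h : IsCubeGen n (k + 1) (I, J)) (hc : c ∉ J) :
    cubeContract n c k (cubeBdry n k I J)
      = cubeSingle n (k + 1) (I, J) - cubeRetract n {c} (k + 1) (cubeSingle n (k + 1) (I, J)) := by
  have hface : ∀ i ∈ I \ J, i ≠ c →
      cubeContract n c k (cubeSingle n k (I.erase i, J) - cubeSingle n k (I, insert i J)) = 0 := by
    intro i hi hic
    rw [map_sub, cubeContract_cubeSingle (h.erase hi), cubeContract_cubeSingle (h.insertGen hi),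
      if_neg hc, if_neg (by simp [hic.symm, hc]), sub_zero]
  rw [cubeBdry, map_sum]
  by_cases hcI : c ∈ I
  · have hcS : c ∈ I \ J := mem_sdiff.mpr ⟨hcI, hc⟩
    rw [sum_eq_single_of_mem c hcS fun i hi hic => by rw [map_smul, hface i hi hic, smul_zero],
      cubeRetract_cubeSingle h, if_neg (not_disjoint_iff.mpr ⟨c, mem_singleton_self c, hcS⟩),
      sub_zero, map_smul, map_sub, cubeContract_cubeSingle (h.erase hcS),
      cubeContract_cubeSingle (h.insertGen hcS), if_neg hc, if_pos (mem_insert_self c J),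
      erase_insert hc, zero_sub, smul_neg, smul_smul, ← pow_add,
      Odd.neg_one_pow ⟨#{y ∈ I \ J | y ≤ c}, by ring⟩, neg_one_smul, neg_neg]
  · have hcS : c ∉ I \ J := fun h => hcI (mem_sdiff.mp h).1
    rw [cubeRetract_singleton_of_notMem h hcI, sub_self]
    exact sum_eq_zero fun i hi => by
      rw [map_smul, hface i hi (fun e => hcS (e ▸ hi)), smul_zero]

theorem isChainHomotopyToId_cubeContract (hc0 : c ≠ 0) (hcn : c ≠ n) :
    IsChainHomotopyToId (cubeDiff n) (fun k => cubeRetract n {c} k) (fun k => cubeContract n c k)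
    where
  zero := by
    refine CubeChain.hom_ext fun ⟨I, J⟩ h => ?_
    have hIJ : I \ J = ∅ := card_eq_zero.mp h.2.2.2.2
    rw [LinearMap.comp_apply, LinearMap.sub_apply, LinearMap.id_apply]
    by_cases hc : c ∈ J
    · rw [cubeDiff_cubeContract_of_mem h hc hc0 hcn, hIJ, sum_empty, add_zero]
    · rw [cubeContract_cubeSingle h, if_neg hc, map_zero, cubeRetract_singleton_of_notMem h
        (fun hcI => hc (sdiff_eq_empty_iff_subset.mp hIJ hcI)), sub_self]
  succ k := by
    refine CubeChain.hom_ext fun ⟨I, J⟩ h => ?_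
    rw [LinearMap.add_apply, LinearMap.comp_apply, LinearMap.comp_apply, LinearMap.sub_apply,
      LinearMap.id_apply, cubeDiff_cubeSingle h]
    by_cases hc : c ∈ J
    · rw [cubeDiff_cubeContract_of_mem h hc hc0 hcn, cubeContract_cubeBdry_of_mem h hc, add_assoc,
        ← sum_add_distrib, sum_eq_zero, add_zero]
      intro i hi
      have hcS : c ∉ I \ J := fun h => (mem_sdiff.mp h).2 hc
      have hic : i ≠ c := fun e => hcS (e ▸ hi)
      have := card_filter_le_add_card_filter_le (mem_insert_self c (I \ J))
        (mem_insert_of_mem hi) hic.symm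
      rw [erase_insert hcS] at this
      exact neg_one_pow_smul_add_neg_one_pow_smul
        ⟨#{y ∈ I \ J | y ≤ i} + #{y ∈ (insert c (I \ J)).erase i | y ≤ c} + 1, by omega⟩ _
    · rw [cubeContract_cubeSingle h, if_neg hc, map_zero, zero_add,
        cubeContract_cubeBdry_of_notMem h hc]

lemma cubeRetract_empty (k : ℕ) : cubeRetract n ∅ k = LinearMap.id :=
  CubeChain.hom_ext fun ⟨I, J⟩ h => by
    rw [cubeRetract_cubeSingle h, if_pos (disjoint_empty_left _), sdiff_empty, sdiff_empty,
      LinearMap.id_apply]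

theorem exists_isChainHomotopyToId_cubeRetract {S : Finset ℕ} (h0 : 0 ∉ S) (hn : n ∉ S) :
    ∃ h, IsChainHomotopyToId (cubeDiff n) (fun k => cubeRetract n S k) h := by
  induction S using Finset.induction_on with
  | empty => exact ⟨0, by simpa only [cubeRetract_empty] using IsChainHomotopyToId.refl⟩
  | insert c S _ ih =>
    obtain ⟨h, H⟩ := ih (fun h => h0 (mem_insert_of_mem h)) (fun h => hn (mem_insert_of_mem h))
    have Hc := isChainHomotopyToId_cubeContract (n := n) (c := c)
      (fun e => h0 (e ▸ mem_insert_self c S)) (fun e => hn (e ▸ mem_insert_self c S))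
    have := H.trans Hc cubeDiff_comp_cubeDiff
    simp only [cubeRetract_singleton_comp h0 hn] at this
    exact ⟨_, this⟩

lemma isCubeGen_vertex : IsCubeGen n 0 ({0, n}, {0, n}) := by
  refine ⟨mem_insert_self _ _, by simp, subset_rfl, fun x hx => ?_, by simp⟩
  rcases mem_insert.mp hx with rfl | hx
  · simp
  · simp [mem_singleton.mp hx]

lemma sdiff_Ioo_eq_pair (h0 : 0 ∈ I) (hn : n ∈ I) (hI : I ⊆ range (n + 1)) :
    I \ Ioo 0 n = {0, n} := by
  ext x
  simp only [mem_sdiff, mem_Ioo, mem_insert, mem_singleton]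
  constructor
  · rintro ⟨hx, hx'⟩
    have := mem_range.mp (hI hx)
    omega
  · rintro (rfl | rfl)
    · exact ⟨h0, by omega⟩
    · exact ⟨hn, by omega⟩

lemma cubeRetract_Ioo_zero :
    cubeRetract n (Ioo 0 n) 0 = (cubeAug n).smulRight (cubeSingle n 0 ({0, n}, {0, n})) := by
  refine CubeChain.hom_ext fun ⟨I, J⟩ h => ?_
  have hJ : J = I :=
    subset_antisymm h.2.2.1 (sdiff_eq_empty_iff_subset.mp (card_eq_zero.mp h.2.2.2.2))
  subst hJ
  rw [LinearMap.smulRight_apply, cubeAug_cubeSingle h, one_smul, cubeRetract_cubeSingle h,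
    sdiff_self, if_pos disjoint_bot_right, sdiff_Ioo_eq_pair h.1 h.2.1 h.2.2.2.1]

lemma cubeRetract_Ioo_succ (k : ℕ) : cubeRetract n (Ioo 0 n) (k + 1) = 0 := by
  refine CubeChain.hom_ext fun ⟨I, J⟩ h => ?_
  have hcard : #(I \ J) = k + 1 := h.2.2.2.2
  obtain ⟨i, hi⟩ : (I \ J).Nonempty := card_pos.mp (by omega)
  have hiJ := (mem_sdiff.mp hi).2
  have hi0 : i ≠ 0 := fun e => hiJ (e ▸ h.1)
  have hin : i ≠ n := fun e => hiJ (e ▸ h.2.1)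
  have hile := mem_range.mp (h.2.2.2.1 (mem_sdiff.mp hi).1)
  rw [cubeRetract_cubeSingle h,
    if_neg (not_disjoint_iff.mpr ⟨i, mem_Ioo.mpr ⟨by omega, by omega⟩, hi⟩), LinearMap.zero_apply]

end Cube

theorem stmt_12_general (n : ℕ) :
    (∀ k : ℕ, (cubeDiff n k).comp (cubeDiff n (k + 1)) = 0) ∧
    Function.Surjective (cubeAug n) ∧
    LinearMap.ker (cubeAug n) = LinearMap.range (cubeDiff n 0) ∧
    (∀ k : ℕ, LinearMap.ker (cubeDiff n k) = LinearMap.range (cubeDiff n (k + 1))) := by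
  obtain ⟨h, H⟩ := exists_isChainHomotopyToId_cubeRetract (n := n) (S := Ioo 0 n) (by simp)
    (by simp)
  refine ⟨cubeDiff_comp_cubeDiff, fun z => ⟨z • cubeSingle n 0 ({0, n}, {0, n}), ?_⟩,
    le_antisymm (fun u hu => H.mem_range_zero ?_) ?_,
    fun k => le_antisymm (fun u hu => H.mem_range_succ hu ?_) ?_⟩
  · rw [map_smul, cubeAug_cubeSingle isCubeGen_vertex, smul_eq_mul, mul_one]
  · rw [cubeRetract_Ioo_zero, LinearMap.smulRight_apply, LinearMap.mem_ker.mp hu, zero_smul]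
  · exact LinearMap.range_le_ker_iff.mpr cubeAug_comp_cubeDiff
  · rw [cubeRetract_Ioo_succ, LinearMap.zero_apply]
  · exact LinearMap.range_le_ker_iff.mpr (cubeDiff_comp_cubeDiff k)

/-- For `n ≥ 1`: the differential of the cube complex `C_*([0,n])` satisfies `d ∘ d = 0`;
the augmentation `ε` is surjective with kernel the image of `d : C_1 → C_0`
(so `ε` induces `H_0(C_*([0,n])) ≅ ℤ`); and `H_k(C_*([0,n])) = 0` for all `k ≥ 1`,
i.e. `ker (d : C_{k+1} → C_k) = im (d : C_{k+2} → C_{k+1})`. -/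
theorem stmt_12 (n : ℕ) (hn : 1 ≤ n) :
    (∀ k : ℕ, (cubeDiff n k).comp (cubeDiff n (k + 1)) = 0) ∧
    Function.Surjective (cubeAug n) ∧
    LinearMap.ker (cubeAug n) = LinearMap.range (cubeDiff n 0) ∧
    (∀ k : ℕ, LinearMap.ker (cubeDiff n k) = LinearMap.range (cubeDiff n (k + 1))) :=
  stmt_12_general n
end
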